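/- arXiv:1702.08225 — 10 statements merged into one kernel-verified Lean document; each statement's English description precedes it below -/
import Mathlib

section
/- Let Γ be a numerical semigroup, e' a nonzero element of Γ, and m ∈ Γ. Then Ap(Γ_{e'}, e' + m) = (e' + Ap(Γ, m)) ∪ (e' + m + (Ap(Γ, e') \ {0})) ∪ {0}. -/
/-- A numerical semigroup, viewed as a set of integers: contained in ℕ,
contains 0, closed under addition, with finite complement in ℕ. -/
def IsNumericalSemigroup (Γ : Set ℤ) : Prop :=
  (∀ n ∈ Γ, 0 ≤ n) ∧ (0 : ℤ) ∈ Γ ∧ (∀ a ∈ Γ, ∀ b ∈ Γ, a + b ∈ Γ) ∧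
    {n : ℤ | 0 ≤ n ∧ n ∉ Γ}.Finite

/-- The set of divisors of `x` in `Γ`. -/
def SetDiv (Γ : Set ℤ) (x : ℤ) : Set ℤ := {s ∈ Γ | x - s ∈ Γ}

/-- The Apéry set of `Γ` with respect to an integer `x`. -/
def Ap (Γ : Set ℤ) (x : ℤ) : Set ℤ := {m ∈ Γ | m - x ∉ Γ}

/-- The Arf property. -/
def IsArf (Γ : Set ℤ) : Prop :=
  ∀ x ∈ Γ, ∀ y ∈ Γ, ∀ z ∈ Γ, z ≤ y → y ≤ x → x + y - z ∈ Γ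

/-- The translate Γ_{e'} = {0} ∪ (e' + Γ). -/
def ShiftSG (Γ : Set ℤ) (e' : ℤ) : Set ℤ := {0} ∪ (fun s => e' + s) '' Γ

/-- `c` is the conductor of `Γ`: least integer with `c + ℕ ⊆ Γ`. -/
def IsConductor (Γ : Set ℤ) (c : ℤ) : Prop :=
  (∀ n, c ≤ n → n ∈ Γ) ∧ ∀ c', (∀ n, c' ≤ n → n ∈ Γ) → c ≤ c'

/-- `e` is the multiplicity of `Γ`: its least nonzero element. -/
def IsMultiplicity (Γ : Set ℤ) (e : ℤ) : Prop :=
  e ∈ Γ ∧ e ≠ 0 ∧ ∀ s ∈ Γ, s ≠ 0 → e ≤ s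

/-- The genus of `Γ`: the number of gaps. -/
noncomputable def genus (Γ : Set ℤ) : ℕ := {n : ℤ | 0 ≤ n ∧ n ∉ Γ}.ncard

/-- `m` is irreducible in `Γ` if its only divisors are `0` and `m`. -/
def IrreducibleIn (Γ : Set ℤ) (m : ℤ) : Prop :=
  m ∈ Γ ∧ m ≠ 0 ∧ SetDiv Γ m = {0, m}

/-- The second Feng-Rao number of `Γ`, with multiplicity `e`. -/
noncomputable def FengRaoNumber2 (Γ : Set ℤ) (e : ℤ) : ℕ :=
  sInf {n : ℕ | ∃ x : ℤ, 1 ≤ x ∧ x ≤ e ∧ (Ap Γ x).ncard = n}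

/-- The first (classical) Feng-Rao distance of `m` in `Γ`. -/
noncomputable def FengRaoDist1 (Γ : Set ℤ) (m : ℤ) : ℕ :=
  sInf {n : ℕ | ∃ m₁ ∈ Γ, m ≤ m₁ ∧ (SetDiv Γ m₁).ncard = n}

/-- The second (generalized) Feng-Rao distance of `m` in `Γ`. -/
noncomputable def FengRaoDist2 (Γ : Set ℤ) (m : ℤ) : ℕ :=
  sInf {n : ℕ | ∃ m₁ ∈ Γ, ∃ m₂ ∈ Γ, m ≤ m₁ ∧ m₁ < m₂ ∧
    (SetDiv Γ m₁ ∪ SetDiv Γ m₂).ncard = n}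

/-! Write `x ∈ Γ_{e'}` as `x = 0 ∨ x - e' ∈ Γ`. For `s ∈ Γ`, the element `e' + s` lies in
`Ap(Γ_{e'}, e' + m)` exactly when `s - m ≠ 0` and `s - m - e' ∉ Γ`. Splitting according to whether
`s - m ∈ Γ` gives the two translated pieces: if `s - m ∉ Γ` then `s ∈ Ap(Γ, m)`, and otherwise
`s - m ∈ Ap(Γ, e') \ {0}`. Finally `0` lies in the Apéry set because `Γ_{e'}` has no negative
elements. -/

theorem mem_shiftSG_iff {Γ : Set ℤ} {e' x : ℤ} : x ∈ ShiftSG Γ e' ↔ x = 0 ∨ x - e' ∈ Γ := by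
  simp only [ShiftSG, Set.mem_union, Set.mem_singleton_iff, Set.mem_image]
  refine or_congr_right ⟨?_, fun h => ⟨x - e', h, by ring⟩⟩
  rintro ⟨s, hs, rfl⟩
  simpa using hs

theorem nonneg_of_mem_shiftSG {Γ : Set ℤ} {e' x : ℤ} (hΓ : ∀ n ∈ Γ, 0 ≤ n) (he' : 0 ≤ e')
    (hx : x ∈ ShiftSG Γ e') : 0 ≤ x := by
  rcases mem_shiftSG_iff.mp hx with rfl | h
  · rfl
  · linarith [hΓ _ h]

theorem ap_shiftSG_add {Γ : Set ℤ} {e' m : ℤ} (hneg : -(e' + m) ∉ ShiftSG Γ e') :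
    Ap (ShiftSG Γ e') (e' + m) =
      (fun s => e' + s) '' {s ∈ Γ | s - m ∉ ShiftSG Γ e'} ∪ {0} := by
  ext x
  simp only [Ap, Set.mem_ofPred_eq, Set.mem_union, Set.mem_image, Set.mem_singleton_iff]
  constructor
  · rintro ⟨hx, hxm⟩
    rcases mem_shiftSG_iff.mp hx with rfl | hs
    · exact Or.inr rfl
    · refine Or.inl ⟨x - e', ⟨hs, ?_⟩, by ring⟩
      rwa [show x - e' - m = x - (e' + m) by ring]
  · rintro (⟨s, ⟨hs, hsm⟩, rfl⟩ | rfl)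
    · refine ⟨mem_shiftSG_iff.mpr (Or.inr (by simpa using hs)), ?_⟩
      rwa [show e' + s - (e' + m) = s - m by ring]
    · exact ⟨mem_shiftSG_iff.mpr (Or.inl rfl), by simpa using hneg⟩

theorem setOf_sub_not_mem_shiftSG {Γ : Set ℤ} {e' m : ℤ} (h0 : (0 : ℤ) ∈ Γ)
    (hadd : ∀ a ∈ Γ, ∀ b ∈ Γ, a + b ∈ Γ) (he' : e' ∈ Γ) (hm : m ∈ Γ) :
    {s ∈ Γ | s - m ∉ ShiftSG Γ e'} = Ap Γ m ∪ (fun s => m + s) '' (Ap Γ e' \ {0}) := by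
  ext s
  simp only [Ap, mem_shiftSG_iff, Set.mem_ofPred_eq, Set.mem_union, Set.mem_image, Set.mem_sdiff,
    Set.mem_singleton_iff, not_or]
  constructor
  · rintro ⟨hs, hsm, hsme⟩
    by_cases hsm' : s - m ∈ Γ
    · exact Or.inr ⟨s - m, ⟨⟨hsm', hsme⟩, hsm⟩, by ring⟩
    · exact Or.inl ⟨hs, hsm'⟩
  · rintro (⟨hs, hsm⟩ | ⟨b, ⟨⟨hb, hbe⟩, hb0⟩, rfl⟩)
    · refine ⟨hs, fun h => hsm (h ▸ h0), fun h => hsm ?_⟩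
      simpa using hadd e' he' _ h
    · exact ⟨hadd m hm b hb, by simpa using hb0, by simpa using hbe⟩

theorem apery_trans (Γ : Set ℤ) (hΓ : IsNumericalSemigroup Γ)
    (e' : ℤ) (he' : e' ∈ Γ) (hne : e' ≠ 0) (m : ℤ) (hm : m ∈ Γ) :
    Ap (ShiftSG Γ e') (e' + m) =
      ((fun s => e' + s) '' Ap Γ m) ∪
      ((fun s => e' + m + s) '' (Ap Γ e' \ {0})) ∪ {0} := by
  obtain ⟨hnonneg, h0, hadd, -⟩ := hΓ
  have he'_pos : 0 < e' := (hnonneg e' he').lt_of_ne' hne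
  have hneg : -(e' + m) ∉ ShiftSG Γ e' := fun h => by
    linarith [nonneg_of_mem_shiftSG hnonneg he'_pos.le h, hnonneg m hm]
  rw [ap_shiftSG_add hneg, setOf_sub_not_mem_shiftSG h0 hadd he' hm, Set.image_union,
    Set.image_image]
  simp only [add_assoc]
end

section
/- Let Γ be an Arf numerical semigroup with elements 0 = ρ₁ < ρ₂ < ⋯ and distances d_i = ρ_{i+1} − ρ_i. If d_i < d_{i−1}, then Ap(Γ, −d_i) = {ρ₁, …, ρ_{i−1}}. -/
/-!
The Arf condition makes the gaps `d_j = ρ (j + 1) - ρ j` non-increasing, since `2 ρ (j + 1) - ρ j`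
lies in `Γ` beyond `ρ (j + 1)`. It also gives `m + d_i = m + ρ (i + 1) - ρ i ∈ Γ` for every
`m ≥ ρ i` in `Γ`, so no such `m` is in the Apéry set. Conversely, for `j < i` we have
`0 < d_i < d_{i-1} ≤ d_j`, so `ρ j + d_i` falls strictly between `ρ j` and `ρ (j + 1)`.
-/

open Set

theorem IsArf.add_sub_mem {Γ : Set ℤ} (hA : IsArf Γ) {x y z : ℤ} (hx : x ∈ Γ) (hy : y ∈ Γ)
    (hz : z ∈ Γ) (hzx : z ≤ x) (hzy : z ≤ y) : x + y - z ∈ Γ := by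
  rcases le_total y x with hyx | hxy
  · exact hA x hx y hy z hz hzy hyx
  · simpa only [add_comm] using hA y hy x hx z hz hzx hxy

theorem StrictMonoOn.succ_le_of_lt_of_mem_image {ρ : ℕ → ℤ} (hρ : StrictMonoOn ρ (Ici 1))
    {j : ℕ} (hj : 1 ≤ j) {s : ℤ} (hs : s ∈ ρ '' Ici 1) (h : ρ j < s) : ρ (j + 1) ≤ s := by
  obtain ⟨k, hk, rfl⟩ := hs
  exact (hρ.le_iff_le (by simp) hk).2 ((hρ.lt_iff_lt hj hk).1 h)

theorem StrictMonoOn.add_notMem_image_of_lt_gap {ρ : ℕ → ℤ} (hρ : StrictMonoOn ρ (Ici 1))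
    {j : ℕ} (hj : 1 ≤ j) {d : ℤ} (hd₀ : 0 < d) (hd : d < ρ (j + 1) - ρ j) :
    ρ j + d ∉ ρ '' Ici 1 := fun hs => by
  have := hρ.succ_le_of_lt_of_mem_image hj hs (by linarith)
  linarith

theorem IsArf.antitoneOn_gap {Γ : Set ℤ} (hA : IsArf Γ) {ρ : ℕ → ℤ}
    (hρ : StrictMonoOn ρ (Ici 1)) (hΓ : Γ = ρ '' Ici 1) :
    AntitoneOn (fun j => ρ (j + 1) - ρ j) (Ici 1) := by
  refine antitoneOn_nat_Ici_of_succ_le fun j hj => ?_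
  have hmem : ∀ k, 1 ≤ k → ρ k ∈ Γ := fun k hk => hΓ ▸ mem_image_of_mem ρ hk
  have hlt : ρ j < ρ (j + 1) := hρ hj (by simp) (by omega)
  have hnext : ρ (j + 1 + 1) ≤ ρ (j + 1) + ρ (j + 1) - ρ j :=
    hρ.succ_le_of_lt_of_mem_image (by omega)
      (hΓ ▸ hA.add_sub_mem (hmem _ (by omega)) (hmem _ (by omega)) (hmem j hj) hlt.le hlt.le)
      (by linarith)
  linarith

theorem apery_neg_d_general (Γ : Set ℤ)
    (hA : IsArf Γ) (ρ : ℕ → ℤ)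
    (hmono : ∀ i j, 1 ≤ i → i < j → ρ i < ρ j)
    (hrange : Γ = {x : ℤ | ∃ i : ℕ, 1 ≤ i ∧ ρ i = x})
    (i : ℕ) (hi : 2 ≤ i)
    (hd : ρ (i + 1) - ρ i < ρ i - ρ (i - 1)) :
    Ap Γ (-(ρ (i + 1) - ρ i)) = ρ '' Set.Icc 1 (i - 1) := by
  have hρ : StrictMonoOn ρ (Ici 1) := fun a ha b _ hab => hmono a b ha hab
  have hΓ : Γ = ρ '' Ici 1 := hrange
  have hmem : ∀ k, 1 ≤ k → ρ k ∈ Γ := fun k hk => hΓ ▸ mem_image_of_mem ρ hk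
  have hgap_pos : 0 < ρ (i + 1) - ρ i := sub_pos.2 (hmono i (i + 1) (by omega) (by omega))
  ext m
  simp only [Ap, mem_ofPred_eq, sub_neg_eq_add]
  constructor
  · rintro ⟨hm, hm_add⟩
    obtain ⟨j, hj, rfl⟩ := hΓ ▸ hm
    refine mem_image_of_mem ρ ⟨hj, ?_⟩
    by_contra! hij
    have hij' : ρ i ≤ ρ j := (hρ.le_iff_le (show 1 ≤ i by omega) hj).2 (by omega)
    have hmem_add := hA.add_sub_mem (hmem j hj) (hmem (i + 1) (by omega)) (hmem i (by omega))
      hij' (by linarith)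
    exact hm_add (by rwa [add_sub_assoc] at hmem_add)
  · rintro ⟨j, ⟨hj, hji⟩, rfl⟩
    refine ⟨hmem j hj, fun h => hρ.add_notMem_image_of_lt_gap hj hgap_pos ?_ (hΓ ▸ h)⟩
    have hanti := hA.antitoneOn_gap hρ hΓ hj (show 1 ≤ i - 1 by omega) hji
    simp only [Nat.sub_add_cancel (show 1 ≤ i by omega)] at hanti
    linarith

theorem apery_neg_d (Γ : Set ℤ) (hΓ : IsNumericalSemigroup Γ)
    (hA : IsArf Γ) (ρ : ℕ → ℤ)
    (hmono : ∀ i j, 1 ≤ i → i < j → ρ i < ρ j)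
    (hrange : Γ = {x : ℤ | ∃ i : ℕ, 1 ≤ i ∧ ρ i = x})
    (i : ℕ) (hi : 2 ≤ i)
    (hd : ρ (i + 1) - ρ i < ρ i - ρ (i - 1)) :
    Ap Γ (-(ρ (i + 1) - ρ i)) = ρ '' Set.Icc 1 (i - 1) :=
  apery_neg_d_general Γ hA ρ hmono hrange i hi hd
end

section
/- Let Γ be an Arf numerical semigroup with distances d_i. If d_j ≤ x < d_{j−1} for a positive integer x, then Ap(Γ, −d_j) ⊆ Ap(Γ, −x), and consequently #Ap(Γ, x) ≥ #Ap(Γ, d_j). -/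
/-!
In an Arf semigroup the distances `d_i` are non-increasing, and `ρ_j ≤ m ∈ Γ` forces
`m + d_j ∈ Γ` (the Arf condition applied to `ρ_j ≤ ρ_{j+1} ≤ m`). Hence an element `m` of
`Ap(Γ, -d_j)` lies below `ρ_j`, say `m = ρ_k` with `k < j`; the next element of `Γ` is then
`ρ_k + d_k` with `d_k ≥ d_{j-1} > x`, so `m + x ∉ Γ`. The inequality of cardinalities follows
from `#Ap(Γ, y) = #Ap(Γ, -y) + y`, obtained by splitting `Γ ∩ [0, c)` and `Γ ∩ [0, c + y)`
along `Ap(Γ, -y)` and `Ap(Γ, y)`, where every integer `≥ c` lies in `Γ`.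
-/

lemma IsNumericalSemigroup.exists_forall_le_mem {Γ : Set ℤ} (hΓ : IsNumericalSemigroup Γ) :
    ∃ c, ∀ n, c ≤ n → n ∈ Γ := by
  obtain ⟨B, hB⟩ := hΓ.2.2.2.bddAbove
  refine ⟨max (B + 1) 0, fun n hn => ?_⟩
  by_contra hnΓ
  have : n ≤ B := hB ⟨by omega, hnΓ⟩
  omega

section Counting

variable {Γ : Set ℤ} {c : ℤ}

lemma ap_subset_Ico (hnonneg : ∀ n ∈ Γ, 0 ≤ n) (hc : ∀ n, c ≤ n → n ∈ Γ) (y : ℤ) :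
    Ap Γ y ⊆ Set.Ico 0 (c + y) := fun m ⟨hm, hmy⟩ =>
  ⟨hnonneg m hm, by by_contra h; exact hmy (hc _ (by omega))⟩

lemma ap_finite (hnonneg : ∀ n ∈ Γ, 0 ≤ n) (hc : ∀ n, c ≤ n → n ∈ Γ) (y : ℤ) :
    (Ap Γ y).Finite :=
  (Set.finite_Ico _ _).subset (ap_subset_Ico hnonneg hc y)

lemma ncard_inter_Ico_add (hc : ∀ n, c ≤ n → n ∈ Γ) (hc0 : 0 ≤ c) {y : ℤ} (hy : 0 ≤ y) :
    ((Γ ∩ Set.Ico 0 (c + y)).ncard : ℤ) = (Γ ∩ Set.Ico 0 c).ncard + y := by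
  have hsplit : Γ ∩ Set.Ico 0 (c + y) = Γ ∩ Set.Ico 0 c ∪ Set.Ico c (c + y) := by
    ext n
    simp only [Set.mem_inter_iff, Set.mem_union, Set.mem_Ico]
    constructor
    · rintro ⟨hn, h0, hlt⟩
      by_cases hnc : n < c
      exacts [Or.inl ⟨hn, h0, hnc⟩, Or.inr ⟨by omega, hlt⟩]
    · rintro (⟨hn, h0, hlt⟩ | ⟨hcn, hlt⟩)
      exacts [⟨hn, h0, by omega⟩, ⟨hc n hcn, by omega, hlt⟩]
  have hdisj : Disjoint (Γ ∩ Set.Ico 0 c) (Set.Ico c (c + y)) :=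
    Set.disjoint_left.2 fun n ⟨_, hn⟩ hn' => by simp only [Set.mem_Ico] at hn hn'; omega
  have hIco : (Set.Ico c (c + y)).ncard = (c + y - c).toNat := by
    rw [← Finset.coe_Ico, Set.ncard_coe_finset, Int.card_Ico]
  rw [hsplit, Set.ncard_union_eq hdisj ((Set.finite_Ico _ _).subset Set.inter_subset_right)
    (Set.finite_Ico _ _), hIco]
  push_cast
  omega

theorem ncard_ap_eq_ncard_ap_neg_add (hnonneg : ∀ n ∈ Γ, 0 ≤ n) (hc : ∀ n, c ≤ n → n ∈ Γ)
    {y : ℤ} (hy : 0 ≤ y) : ((Ap Γ y).ncard : ℤ) = (Ap Γ (-y)).ncard + y := by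
  have hc0 : 0 ≤ c := hnonneg c (hc c le_rfl)
  set D : Set ℤ := {n ∈ Γ ∩ Set.Ico 0 c | n + y ∈ Γ} with hD
  have hlow : Γ ∩ Set.Ico 0 c = Ap Γ (-y) ∪ D := by
    ext n
    constructor
    · rintro ⟨hn, hIco⟩
      by_cases hny : n + y ∈ Γ
      · exact Or.inr ⟨⟨hn, hIco⟩, hny⟩
      · exact Or.inl ⟨hn, by rwa [sub_neg_eq_add]⟩
    · rintro (hn | ⟨hn, -⟩)
      · obtain ⟨h0, hlt⟩ := ap_subset_Ico hnonneg hc (-y) hn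
        exact ⟨hn.1, h0, by omega⟩
      · exact hn
  have hhigh : Γ ∩ Set.Ico 0 (c + y) = Ap Γ y ∪ (· + y) '' D := by
    ext m
    simp only [hD, Ap, Set.mem_inter_iff, Set.mem_union, Set.mem_ofPred_eq, Set.mem_image,
      Set.mem_Ico]
    constructor
    · rintro ⟨hm, h0, hlt⟩
      by_cases hmy : m - y ∈ Γ
      · exact Or.inr ⟨m - y, ⟨⟨hmy, hnonneg _ hmy, by omega⟩, by simpa using hm⟩, by ring⟩
      · exact Or.inl ⟨hm, hmy⟩
    · rintro (hm | ⟨n, ⟨⟨-, h0, hlt⟩, hny⟩, rfl⟩)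
      exacts [⟨hm.1, ap_subset_Ico hnonneg hc y hm⟩, ⟨hny, by omega, by omega⟩]
  have hDfin : D.Finite := (Set.finite_Ico 0 c).subset fun n hn => hn.1.2
  have hlow_disj : Disjoint (Ap Γ (-y)) D :=
    Set.disjoint_left.2 fun n hn hnD => hn.2 (by simpa using hnD.2)
  have hhigh_disj : Disjoint (Ap Γ y) ((· + y) '' D) :=
    Set.disjoint_left.2 fun _ hm ⟨n, hnD, hnm⟩ => hm.2 (by simpa [← hnm] using hnD.1.1)
  have hcount := ncard_inter_Ico_add hc hc0 hy
  rw [hlow, hhigh, Set.ncard_union_eq hlow_disj (ap_finite hnonneg hc _) hDfin,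
    Set.ncard_union_eq hhigh_disj (ap_finite hnonneg hc _) (hDfin.image _),
    Set.ncard_image_of_injective _ (add_left_injective y)] at hcount
  push_cast at hcount
  omega

end Counting

section Enumeration

variable {Γ : Set ℤ} {ρ : ℕ → ℤ}

lemma le_of_lt_of_mem (hmono : StrictMonoOn ρ (Set.Ici 1))
    (hrange : Γ = {x : ℤ | ∃ i : ℕ, 1 ≤ i ∧ ρ i = x}) {k : ℕ} (hk : 1 ≤ k) {s : ℤ}
    (hs : s ∈ Γ) (hks : ρ k < s) : ρ (k + 1) ≤ s := by
  rw [hrange] at hs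
  obtain ⟨l, hl, rfl⟩ := hs
  have hkl : k < l := (hmono.lt_iff_lt hk hl).1 hks
  exact (hmono.le_iff_le (show 1 ≤ k + 1 by omega) hl).2 hkl

lemma IsArf.sub_antitoneOn (hA : IsArf Γ) (hmono : StrictMonoOn ρ (Set.Ici 1))
    (hrange : Γ = {x : ℤ | ∃ i : ℕ, 1 ≤ i ∧ ρ i = x}) :
    AntitoneOn (fun i => ρ (i + 1) - ρ i) {i | 1 ≤ i} := by
  have hmem : ∀ k, 1 ≤ k → ρ k ∈ Γ := fun k hk => hrange ▸ ⟨k, hk, rfl⟩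
  refine antitoneOn_nat_Ici_of_succ_le fun i hi => ?_
  have hlt : ρ i < ρ (i + 1) := hmono hi (show 1 ≤ i + 1 by omega) (Nat.lt_succ_self i)
  have harf := hA _ (hmem (i + 1) (by omega)) _ (hmem (i + 1) (by omega)) _ (hmem i hi)
    hlt.le le_rfl
  have := le_of_lt_of_mem hmono hrange (show 1 ≤ i + 1 by omega) harf (by omega)
  omega

lemma IsArf.add_sub_mem_s7 (hA : IsArf Γ) (hmono : StrictMonoOn ρ (Set.Ici 1))
    (hrange : Γ = {x : ℤ | ∃ i : ℕ, 1 ≤ i ∧ ρ i = x}) {j : ℕ} (hj : 1 ≤ j) {m : ℤ}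
    (hm : m ∈ Γ) (hjm : ρ j ≤ m) : m + (ρ (j + 1) - ρ j) ∈ Γ := by
  have hmem : ∀ k, 1 ≤ k → ρ k ∈ Γ := fun k hk => hrange ▸ ⟨k, hk, rfl⟩
  rcases hjm.eq_or_lt with rfl | hlt
  · simpa using hmem (j + 1) (by omega)
  · have hlt' : ρ j < ρ (j + 1) := hmono hj (show 1 ≤ j + 1 by omega) (Nat.lt_succ_self j)
    simpa [add_sub_assoc] using hA m hm _ (hmem (j + 1) (by omega)) _ (hmem j hj) hlt'.le
      (le_of_lt_of_mem hmono hrange hj hm hlt)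

lemma IsArf.ap_neg_sub_subset (hA : IsArf Γ) (hmono : StrictMonoOn ρ (Set.Ici 1))
    (hrange : Γ = {x : ℤ | ∃ i : ℕ, 1 ≤ i ∧ ρ i = x}) {j : ℕ} (hj : 1 ≤ j) {x : ℤ}
    (hx : 0 < x) (hxj : x < ρ j - ρ (j - 1)) :
    Ap Γ (-(ρ (j + 1) - ρ j)) ⊆ Ap Γ (-x) := by
  rintro m ⟨hm, hmd⟩
  refine ⟨hm, fun hmx => ?_⟩
  rw [sub_neg_eq_add] at hmd hmx
  have hmj : m < ρ j := lt_of_not_ge fun hjm => hmd (hA.add_sub_mem_s7 hmono hrange hj hm hjm)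
  obtain ⟨k, hk, rfl⟩ : m ∈ {x : ℤ | ∃ i : ℕ, 1 ≤ i ∧ ρ i = x} := hrange ▸ hm
  have hkj : k < j := (hmono.lt_iff_lt hk hj).1 hmj
  have hgap : ρ (j - 1 + 1) - ρ (j - 1) ≤ ρ (k + 1) - ρ k :=
    hA.sub_antitoneOn hmono hrange hk (show 1 ≤ j - 1 by omega) (by omega)
  rw [Nat.sub_add_cancel hj] at hgap
  have := le_of_lt_of_mem hmono hrange hk hmx (by omega)
  omega

end Enumeration

theorem apery_between_distances (Γ : Set ℤ) (hΓ : IsNumericalSemigroup Γ)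
    (hA : IsArf Γ) (ρ : ℕ → ℤ)
    (hmono : ∀ i j, 1 ≤ i → i < j → ρ i < ρ j)
    (hrange : Γ = {x : ℤ | ∃ i : ℕ, 1 ≤ i ∧ ρ i = x})
    (j : ℕ) (hj : 2 ≤ j) (x : ℤ) (hx : 0 < x)
    (h1 : ρ (j + 1) - ρ j ≤ x) (h2 : x < ρ j - ρ (j - 1)) :
    Ap Γ (-(ρ (j + 1) - ρ j)) ⊆ Ap Γ (-x) ∧
    (Ap Γ (ρ (j + 1) - ρ j)).ncard ≤ (Ap Γ x).ncard := by
  have hmono' : StrictMonoOn ρ (Set.Ici 1) := fun a ha b _ hab => hmono a b ha hab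
  have hincl := hA.ap_neg_sub_subset hmono' hrange (by omega) hx h2
  refine ⟨hincl, ?_⟩
  obtain ⟨c, hc⟩ := hΓ.exists_forall_le_mem
  have hnonneg := hΓ.1
  have hd : 0 < ρ (j + 1) - ρ j := sub_pos.2 (hmono j (j + 1) (by omega) (by omega))
  have hcard_d := ncard_ap_eq_ncard_ap_neg_add hnonneg hc hd.le
  have hcard_x := ncard_ap_eq_ncard_ap_neg_add hnonneg hc hx.le
  have hle : (Ap Γ (-(ρ (j + 1) - ρ j))).ncard ≤ (Ap Γ (-x)).ncard :=
    Set.ncard_le_ncard hincl (ap_finite hnonneg hc _)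
  omega
end

section
/- Let Γ be an Arf numerical semigroup with multiplicity sequence (d₁, …, d_r). Then the second Feng-Rao number of Γ equals min{d₁, d₂ + 1, …, d_{r−1} + r − 2, r}. -/
open Set

lemma Int.natCast_sInf (S : Set ℕ) : ((sInf S : ℕ) : ℤ) = sInf (((↑) : ℕ → ℤ) '' S) := by
  rcases S.eq_empty_or_nonempty with rfl | hS
  · simp [Int.csInf_empty]
  · exact Monotone.map_csInf_of_continuousAt continuous_of_discreteTopology.continuousAt
      Nat.mono_cast hS

lemma Set.ncard_sdiff_sub_ncard_sdiff {α : Type*} {s t : Set α} (hs : s.Finite) (ht : t.Finite) :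
    ((s \ t).ncard : ℤ) - (t \ s).ncard = s.ncard - t.ncard := by
  have hs' := ncard_inter_add_ncard_sdiff_eq_ncard s t hs
  have ht' := ncard_inter_add_ncard_sdiff_eq_ncard t s ht
  rw [inter_comm] at ht'
  omega

namespace NumericalSemigroup

variable {Γ : Set ℤ} {ρ : ℕ → ℤ}

lemma finite_inter_Iio_of_bddBelow (hbdd : BddBelow Γ) (c : ℤ) : (Γ ∩ Iio c).Finite :=
  (hbdd.mono inter_subset_left).finite_of_bddAbove ⟨c, fun _ h => h.2.le⟩

lemma finite_setOf_add_notMem {c : ℤ} (hbdd : BddBelow Γ) (hc : Ici c ⊆ Γ) (x : ℤ) :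
    {s ∈ Γ | s + x ∉ Γ}.Finite :=
  (finite_inter_Iio_of_bddBelow hbdd (c - x)).subset fun s ⟨hs, hsx⟩ =>
    ⟨hs, by by_contra h; exact hsx (hc (by simp at h ⊢; linarith))⟩

lemma ncard_Ap_eq {c x : ℤ} (hbdd : BddBelow Γ) (hc : Ici c ⊆ Γ) (hx : 0 ≤ x) :
    ((Ap Γ x).ncard : ℤ) = x + {s ∈ Γ | s + x ∉ Γ}.ncard := by
  have hlt : ∀ n ∉ Γ, n < c := fun n hn => not_le.1 fun h => hn (hc h)
  set B := Γ ∩ Iio c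
  set G := Γ ∩ Iio (c + x)
  have hB : B.Finite := finite_inter_Iio_of_bddBelow hbdd c
  have hG : G = B ∪ Ico c (c + x) := by
    ext s
    simp only [B, G, mem_inter_iff, mem_union, mem_Iio, mem_Ico]
    constructor
    · rintro ⟨hs, hsx⟩
      by_cases hsc : s < c
      · exact Or.inl ⟨hs, hsc⟩
      · exact Or.inr ⟨not_lt.1 hsc, hsx⟩
    · rintro (⟨hs, hsc⟩ | ⟨hcs, hsx⟩)
      · exact ⟨hs, by linarith⟩
      · exact ⟨hc hcs, hsx⟩
  have hGcard : (G.ncard : ℤ) = B.ncard + x := by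
    have hdisj : Disjoint B (Ico c (c + x)) :=
      disjoint_left.2 fun s hs hs' => not_lt.2 hs'.1 hs.2
    rw [hG, ncard_union_eq hdisj hB (finite_Ico _ _), ← Finset.coe_Ico, ncard_coe_finset,
      Int.card_Ico, add_sub_cancel_left, Nat.cast_add, Int.toNat_of_nonneg hx]
  have hAp : Ap Γ x = G \ (· + x) '' B := by
    ext m
    simp only [Ap, G, B, mem_ofPred_eq, mem_sdiff, mem_inter_iff, mem_Iio, mem_image]
    constructor
    · rintro ⟨hm, hmx⟩
      refine ⟨⟨hm, by linarith [hlt _ hmx]⟩, ?_⟩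
      rintro ⟨s, ⟨hs, -⟩, rfl⟩
      exact hmx (by simpa using hs)
    · rintro ⟨⟨hm, hmc⟩, hmB⟩
      exact ⟨hm, fun hmx => hmB ⟨m - x, ⟨hmx, by linarith⟩, by ring⟩⟩
  have hT : (· + x) '' {s ∈ Γ | s + x ∉ Γ} = (· + x) '' B \ G := by
    ext a
    simp only [G, B, mem_ofPred_eq, mem_sdiff, mem_inter_iff, mem_Iio, mem_image]
    constructor
    · rintro ⟨s, ⟨hs, hsx⟩, rfl⟩
      exact ⟨⟨s, ⟨hs, by linarith [hlt _ hsx]⟩, rfl⟩, fun h => hsx h.1⟩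
    · rintro ⟨⟨s, ⟨hs, hsc⟩, rfl⟩, hG'⟩
      exact ⟨s, ⟨hs, fun h => hG' ⟨h, by linarith⟩⟩, rfl⟩
  have key := ncard_sdiff_sub_ncard_sdiff (hG ▸ hB.union (finite_Ico c (c + x))) (hB.image (· + x))
  rw [← hT, ← hAp, ncard_image_of_injective _ (add_left_injective x),
    ncard_image_of_injective _ (add_left_injective x), hGcard] at key
  omega

lemma succ_le_of_mem_of_lt (hρ : StrictMonoOn ρ (Ici 1)) (hΓ : Γ = ρ '' Ici 1) {i : ℕ}
    (hi : 1 ≤ i) {a : ℤ} (ha : a ∈ Γ) (hia : ρ i < a) : ρ (i + 1) ≤ a := by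
  obtain ⟨j, hj, rfl⟩ := hΓ ▸ ha
  exact (hρ.le_iff_le (mem_Ici.2 (by omega)) hj).2 ((hρ.lt_iff_lt hi hj).1 hia)

lemma notMem_of_lt_of_lt (hρ : StrictMonoOn ρ (Ici 1)) (hΓ : Γ = ρ '' Ici 1) {i : ℕ}
    (hi : 1 ≤ i) {b : ℤ} (hib : ρ i < b) (hbi : b < ρ (i + 1)) : b ∉ Γ :=
  fun hb => (succ_le_of_mem_of_lt hρ hΓ hi hb hib).not_gt hbi

lemma ncard_setOf_add_notMem_le (hΓ : Γ = ρ '' Ici 1) {x : ℤ} {k : ℕ}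
    (h : ∀ m, k ≤ m → ρ m + x ∈ Γ) : {s ∈ Γ | s + x ∉ Γ}.ncard ≤ k - 1 := by
  have hsub : {s ∈ Γ | s + x ∉ Γ} ⊆ ρ '' Ico 1 k := by
    rintro _ ⟨hs, hsx⟩
    obtain ⟨m, hm, rfl⟩ := hΓ ▸ hs
    exact ⟨m, ⟨hm, not_le.1 fun hkm => hsx (h m hkm)⟩, rfl⟩
  calc {s ∈ Γ | s + x ∉ Γ}.ncard ≤ (ρ '' Ico 1 k).ncard :=
        ncard_le_ncard hsub ((finite_Ico 1 k).image ρ)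
    _ ≤ (Ico 1 k).ncard := ncard_image_le (finite_Ico 1 k)
    _ = k - 1 := ncard_Ico_nat 1 k

lemma le_ncard_setOf_add_notMem {c : ℤ} (hρ : StrictMonoOn ρ (Ici 1)) (hΓ : Γ = ρ '' Ici 1)
    (hbdd : BddBelow Γ) (hc : Ici c ⊆ Γ) {x : ℤ} (hx : 0 < x) {j : ℕ}
    (h : ∀ m, 1 ≤ m → m < j → x < ρ (m + 1) - ρ m) : j - 1 ≤ {s ∈ Γ | s + x ∉ Γ}.ncard := by
  have hsub : ρ '' Ico 1 j ⊆ {s ∈ Γ | s + x ∉ Γ} := by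
    rintro _ ⟨m, ⟨hm, hmj⟩, rfl⟩
    refine ⟨hΓ ▸ mem_image_of_mem ρ hm, notMem_of_lt_of_lt hρ hΓ hm (by linarith) ?_⟩
    linarith [h m hm hmj]
  calc j - 1 = (Ico 1 j).ncard := (ncard_Ico_nat 1 j).symm
    _ = (ρ '' Ico 1 j).ncard :=
        ((hρ.injOn.mono fun _ hm => mem_Ici.2 hm.1).ncard_image).symm
    _ ≤ {s ∈ Γ | s + x ∉ Γ}.ncard := ncard_le_ncard hsub (finite_setOf_add_notMem hbdd hc x)

lemma exists_le_add_ncard_setOf_add_notMem {r : ℕ} (hρ : StrictMonoOn ρ (Ici 1))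
    (hΓ : Γ = ρ '' Ici 1) (hbdd : BddBelow Γ) (hc : Ici (ρ r) ⊆ Γ) {x : ℤ} (hx : 0 < x) :
    (∃ i, 1 ≤ i ∧ i ≤ r - 1 ∧ ρ (i + 1) - ρ i + i - 1 ≤ x + {s ∈ Γ | s + x ∉ Γ}.ncard) ∨
      (r : ℤ) ≤ x + {s ∈ Γ | s + x ∉ Γ}.ncard := by
  classical
  by_cases hP : ∃ i, 1 ≤ i ∧ i ≤ r - 1 ∧ ρ (i + 1) - ρ i ≤ x
  · obtain ⟨hj, hjr, hjx⟩ := Nat.find_spec hP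
    have hT := le_ncard_setOf_add_notMem hρ hΓ hbdd hc hx (j := Nat.find hP) fun m hm hmj => by
      have hm' := Nat.find_min hP hmj
      push Not at hm'
      exact hm' hm (by omega)
    exact Or.inl ⟨Nat.find hP, hj, hjr, by omega⟩
  · push Not at hP
    have hT := le_ncard_setOf_add_notMem hρ hΓ hbdd hc hx (j := r) fun m hm hmr =>
      hP m hm (by omega)
    exact Or.inr (by omega)

end NumericalSemigroup

open NumericalSemigroup

section

variable {Γ : Set ℤ} {ρ : ℕ → ℤ}

lemma IsArf.antitoneOn_sub (hA : IsArf Γ) (hρ : StrictMonoOn ρ (Ici 1)) (hΓ : Γ = ρ '' Ici 1) :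
    AntitoneOn (fun i => ρ (i + 1) - ρ i) (Ici 1) := by
  refine antitoneOn_nat_Ici_of_succ_le fun i hi => ?_
  have hmem : ∀ {j}, 1 ≤ j → ρ j ∈ Γ := fun hj => hΓ ▸ mem_image_of_mem ρ hj
  have hlt : ρ i < ρ (i + 1) := hρ hi (mem_Ici.2 (by omega)) (by omega)
  have hnext := succ_le_of_mem_of_lt hρ hΓ (i := i + 1) (by omega)
    (hA _ (hmem (by omega)) _ (hmem (by omega)) _ (hmem hi) hlt.le le_rfl) (by linarith)
  linarith

lemma IsArf.add_sub_mem_s9 (hA : IsArf Γ) (hρ : StrictMonoOn ρ (Ici 1)) (hΓ : Γ = ρ '' Ici 1)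
    {i m : ℕ} (hi : 1 ≤ i) (him : i ≤ m) : ρ m + (ρ (i + 1) - ρ i) ∈ Γ := by
  have hmem : ∀ {j}, 1 ≤ j → ρ j ∈ Γ := fun hj => hΓ ▸ mem_image_of_mem ρ hj
  rcases him.eq_or_lt with rfl | him
  · simpa using hmem (by omega)
  · have hle : ∀ {j k}, 1 ≤ j → j ≤ k → ρ j ≤ ρ k := fun hj hjk =>
      (hρ.le_iff_le hj (mem_Ici.2 (by omega))).2 hjk
    rw [← add_sub_assoc]
    exact hA _ (hmem (by omega)) _ (hmem (by omega)) _ (hmem hi) (hle hi (by omega))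
      (hle (by omega) him)

end

theorem frnumber_arf_general (Γ : Set ℤ) (hΓ : IsNumericalSemigroup Γ)
    (hA : IsArf Γ) (ρ : ℕ → ℤ)
    (hmono : ∀ i j, 1 ≤ i → i < j → ρ i < ρ j)
    (hrange : Γ = {x : ℤ | ∃ i : ℕ, 1 ≤ i ∧ ρ i = x})
    (r : ℕ) (hr : 1 ≤ r) (hc : IsConductor Γ (ρ r)) :
    ((FengRaoNumber2 Γ (ρ 2) : ℤ)) =
      sInf ({z : ℤ | ∃ i : ℕ, 1 ≤ i ∧ i ≤ r - 1 ∧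
        z = (ρ (i + 1) - ρ i) + (i : ℤ) - 1} ∪ {(r : ℤ)}) := by
  have hρ : StrictMonoOn ρ (Ici 1) := fun i hi j _ hij => hmono i j hi hij
  have hΓρ : Γ = ρ '' Ici 1 := hrange
  have hbdd : BddBelow Γ := ⟨0, hΓ.1⟩
  have hcond : Ici (ρ r) ⊆ Γ := hc.1
  have hρ1 : 0 ≤ ρ 1 := hΓ.1 _ (hΓρ ▸ mem_image_of_mem ρ self_mem_Ici)
  have hd : ∀ i, 1 ≤ i → 0 < ρ (i + 1) - ρ i := fun i hi => by
    linarith [hmono i (i + 1) hi (by omega)]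
  have hAp : ∀ x, 0 < x → ((Ap Γ x).ncard : ℤ) = x + {s ∈ Γ | s + x ∉ Γ}.ncard :=
    fun x hx => ncard_Ap_eq hbdd hcond hx.le
  rw [FengRaoNumber2, Int.natCast_sInf]
  apply csInf_eq_csInf_of_forall_exists_le
  · rintro _ ⟨_, ⟨x, hx, -, rfl⟩, rfl⟩
    rcases exists_le_add_ncard_setOf_add_notMem hρ hΓρ hbdd hcond hx with ⟨i, hi, hir, hle⟩ | hle
    · exact ⟨_, Or.inl ⟨i, hi, hir, rfl⟩, hAp x hx ▸ hle⟩
    · exact ⟨r, Or.inr rfl, hAp x hx ▸ hle⟩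
  · rintro z (⟨i, hi, hir, rfl⟩ | rfl)
    · have hdi : ρ (i + 1) - ρ i ≤ ρ (1 + 1) - ρ 1 := hA.antitoneOn_sub hρ hΓρ self_mem_Ici hi hi
      have hT := ncard_setOf_add_notMem_le hΓρ fun m hm => hA.add_sub_mem_s9 hρ hΓρ hi hm
      refine ⟨_, ⟨_, ⟨_, hd i hi, by linarith, rfl⟩, rfl⟩, ?_⟩
      rw [hAp _ (hd i hi)]
      omega
    · have hT := ncard_setOf_add_notMem_le hΓρ (x := 1) fun m hm =>
        hcond (by linarith [(hρ.le_iff_le hr (mem_Ici.2 (hr.trans hm))).2 hm] : ρ r ≤ ρ m + 1)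
      refine ⟨_, ⟨_, ⟨1, le_rfl, by linarith [hd 1 le_rfl], rfl⟩, rfl⟩, ?_⟩
      rw [hAp 1 one_pos]
      omega

theorem frnumber_arf (Γ : Set ℤ) (hΓ : IsNumericalSemigroup Γ)
    (hA : IsArf Γ) (ρ : ℕ → ℤ)
    (hmono : ∀ i j, 1 ≤ i → i < j → ρ i < ρ j)
    (hrange : Γ = {x : ℤ | ∃ i : ℕ, 1 ≤ i ∧ ρ i = x})
    (hρ1 : ρ 1 = 0)
    (r : ℕ) (hr : 1 ≤ r) (hc : IsConductor Γ (ρ r)) :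
    ((FengRaoNumber2 Γ (ρ 2) : ℤ)) =
      sInf ({z : ℤ | ∃ i : ℕ, 1 ≤ i ∧ i ≤ r - 1 ∧
        z = (ρ (i + 1) - ρ i) + (i : ℤ) - 1} ∪ {(r : ℤ)}) :=
  frnumber_arf_general Γ hΓ hA ρ hmono hrange r hr hc
end

section
/- Let Γ be an Arf numerical semigroup and e' a nonzero element of Γ. Then E(Γ_{e'}, 2) = min{e', E(Γ, 2) + 1}, where Γ_{e'} = {0} ∪ (e' + Γ). -/
/-! Comparing `Ap(S, x)` with the gaps of `S` gives `#Ap(S, x) = x + #{n ∉ S : n - x ∈ S}` for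
`x ≥ 0`, so `#Ap(S, x) = x` when `x ∈ S` and `#Ap(S, x) ≥ x` always. For `1 ≤ x < e'` one has
`Ap(Γ_{e'}, x) = {0} ∪ (e' + Ap(Γ, x))`, one element more than `Ap(Γ, x)`, while
`#Ap(Γ_{e'}, e') = e'`. Finally `#Ap(Γ, x) ≥ x > e ≥ E(Γ, 2)` for `x > e`, so `E(Γ, 2)` is the
minimum of `#Ap(Γ, x)` over all `x ≥ 1`, and minimising over `1 ≤ x ≤ e'` gives the claim. -/

section FengRao

variable {S : Set ℤ} {e x : ℤ}

lemma fengRaoNumber2_le_ncard_ap (hx : 1 ≤ x) (hxe : x ≤ e) :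
    FengRaoNumber2 S e ≤ (Ap S x).ncard :=
  Nat.sInf_le ⟨x, hx, hxe, rfl⟩

lemma exists_ncard_ap_eq_fengRaoNumber2 (he : 1 ≤ e) :
    ∃ x, 1 ≤ x ∧ x ≤ e ∧ (Ap S x).ncard = FengRaoNumber2 S e :=
  Nat.sInf_mem (s := {n | ∃ x, 1 ≤ x ∧ x ≤ e ∧ (Ap S x).ncard = n}) ⟨_, 1, le_rfl, he, rfl⟩

lemma fengRaoNumber2_eq {m : ℤ} (hm : ∃ x, 1 ≤ x ∧ x ≤ e ∧ ((Ap S x).ncard : ℤ) = m)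
    (hle : ∀ x, 1 ≤ x → x ≤ e → m ≤ (Ap S x).ncard) : (FengRaoNumber2 S e : ℤ) = m := by
  obtain ⟨x, hx, hxe, rfl⟩ := hm
  refine congrArg _ (le_antisymm (fengRaoNumber2_le_ncard_ap hx hxe)
    (le_csInf ⟨_, x, hx, hxe, rfl⟩ ?_))
  rintro _ ⟨y, hy, hye, rfl⟩
  exact_mod_cast hle y hy hye

end FengRao

namespace IsNumericalSemigroup

variable {S : Set ℤ} {x : ℤ}

lemma nonneg (hS : IsNumericalSemigroup S) {n : ℤ} (hn : n ∈ S) : 0 ≤ n := hS.1 n hn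

lemma zero_mem (hS : IsNumericalSemigroup S) : (0 : ℤ) ∈ S := hS.2.1

lemma add_mem (hS : IsNumericalSemigroup S) {a b : ℤ} (ha : a ∈ S) (hb : b ∈ S) :
    a + b ∈ S :=
  hS.2.2.1 a ha b hb

lemma finite_gaps (hS : IsNumericalSemigroup S) : {n : ℤ | 0 ≤ n ∧ n ∉ S}.Finite := hS.2.2.2

lemma ap_subset (hS : IsNumericalSemigroup S) (x : ℤ) :
    Ap S x ⊆ Set.Ico 0 x ∪ (· + x) '' {n : ℤ | 0 ≤ n ∧ n ∉ S} := by
  rintro n ⟨hn, hnx⟩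
  rcases lt_or_ge n x with h | h
  · exact Or.inl ⟨hS.nonneg hn, h⟩
  · exact Or.inr ⟨n - x, ⟨by omega, hnx⟩, by ring⟩

lemma finite_ap (hS : IsNumericalSemigroup S) (x : ℤ) : (Ap S x).Finite :=
  ((Set.finite_Ico 0 x).union (hS.finite_gaps.image _)).subset (hS.ap_subset x)

lemma ap_union_gaps (hS : IsNumericalSemigroup S) (hx : 0 ≤ x) :
    Ap S x ∪ {n : ℤ | 0 ≤ n ∧ n ∉ S} =
      Set.Ico 0 x ∪ ((· + x) '' {n : ℤ | 0 ≤ n ∧ n ∉ S} ∪ {n : ℤ | n ∉ S ∧ n - x ∈ S}) := by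
  ext n
  simp only [Ap, Set.mem_union, Set.mem_ofPred_eq, Set.mem_Ico, Set.mem_image,
    ← eq_sub_iff_add_eq, exists_eq_right]
  have h1 : n ∈ S → 0 ≤ n := hS.nonneg
  have h2 : n - x ∈ S → 0 ≤ n - x := hS.nonneg
  grind

lemma ncard_ap (hS : IsNumericalSemigroup S) (hx : 0 ≤ x) :
    ((Ap S x).ncard : ℤ) = x + {n : ℤ | n ∉ S ∧ n - x ∈ S}.ncard := by
  set G := {n : ℤ | 0 ≤ n ∧ n ∉ S}
  set T := {n : ℤ | n ∉ S ∧ n - x ∈ S}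
  have hT : T.Finite := hS.finite_gaps.subset fun n ⟨hn, hnx⟩ => ⟨by linarith [hS.nonneg hnx], hn⟩
  have hApG : Disjoint (Ap S x) G := Set.disjoint_left.2 fun n hn hnG => hnG.2 hn.1
  have hGT : Disjoint ((· + x) '' G) T := by
    rw [Set.disjoint_left]
    rintro _ ⟨g, hg, rfl⟩ ⟨-, hgx⟩
    exact hg.2 (by simpa using hgx)
  have hIco : Disjoint (Set.Ico 0 x) ((· + x) '' G ∪ T) := by
    rw [Set.disjoint_left]
    rintro n ⟨-, hnx⟩ (⟨g, hg, rfl⟩ | ⟨-, hT⟩)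
    · linarith [hg.1]
    · linarith [hS.nonneg hT]
  have hcard := congrArg Set.ncard (hS.ap_union_gaps hx)
  rw [Set.ncard_union_eq hApG (hS.finite_ap x) hS.finite_gaps,
    Set.ncard_union_eq hIco (Set.finite_Ico 0 x) ((hS.finite_gaps.image _).union hT),
    Set.ncard_union_eq hGT (hS.finite_gaps.image _) hT,
    Set.ncard_image_of_injective _ (add_left_injective x)] at hcard
  have hIcoCard : ((Set.Ico 0 x).ncard : ℤ) = x := by
    rw [Set.ncard_eq_toFinset_card', Set.toFinset_Ico, Int.card_Ico_of_le 0 x hx, sub_zero]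
  omega

lemma ncard_ap_of_mem (hS : IsNumericalSemigroup S) (hx : x ∈ S) : ((Ap S x).ncard : ℤ) = x := by
  have hT : {n : ℤ | n ∉ S ∧ n - x ∈ S} = ∅ :=
    Set.eq_empty_of_forall_notMem fun n ⟨hn, hnx⟩ => hn (by simpa using hS.add_mem hnx hx)
  rw [hS.ncard_ap (hS.nonneg hx), hT, Set.ncard_empty, Nat.cast_zero, add_zero]

lemma le_ncard_ap (hS : IsNumericalSemigroup S) (hx : 0 ≤ x) : x ≤ (Ap S x).ncard := by
  rw [hS.ncard_ap hx]
  exact le_add_of_nonneg_right (Nat.cast_nonneg _)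

lemma fengRaoNumber2_le_ncard_ap (hS : IsNumericalSemigroup S) {e : ℤ} (he : e ∈ S) (he0 : e ≠ 0)
    (hx : 1 ≤ x) : FengRaoNumber2 S e ≤ (Ap S x).ncard := by
  rcases le_or_gt x e with hxe | hex
  · exact _root_.fengRaoNumber2_le_ncard_ap hx hxe
  · have hFR := _root_.fengRaoNumber2_le_ncard_ap (S := S)
      (lt_of_le_of_ne (hS.nonneg he) he0.symm) le_rfl
    have hAp := hS.ncard_ap_of_mem he
    have hAx := hS.le_ncard_ap (x := x) (by omega)
    omega

end IsNumericalSemigroup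

section Shift

variable {Γ : Set ℤ} {e' x : ℤ}

lemma mem_shiftSG : x ∈ ShiftSG Γ e' ↔ x = 0 ∨ x - e' ∈ Γ := by
  simp only [ShiftSG, Set.mem_union, Set.mem_singleton_iff, Set.mem_image, ← eq_sub_iff_add_eq',
    exists_eq_right]

lemma self_mem_shiftSG (h0 : (0 : ℤ) ∈ Γ) : e' ∈ ShiftSG Γ e' :=
  mem_shiftSG.2 (Or.inr (by simpa using h0))

lemma IsNumericalSemigroup.shiftSG (hΓ : IsNumericalSemigroup Γ) (he' : e' ∈ Γ) :
    IsNumericalSemigroup (ShiftSG Γ e') := by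
  have he'0 := hΓ.nonneg he'
  refine ⟨fun n hn => ?_, mem_shiftSG.2 (Or.inl rfl), fun a ha b hb => ?_, ?_⟩
  · rcases mem_shiftSG.1 hn with rfl | hn
    · exact le_rfl
    · linarith [hΓ.nonneg hn]
  · rcases mem_shiftSG.1 ha with rfl | ha'
    · simpa using hb
    rcases mem_shiftSG.1 hb with rfl | hb'
    · simpa using ha
    refine mem_shiftSG.2 (Or.inr ?_)
    convert hΓ.add_mem (hΓ.add_mem ha' he') hb' using 1
    ring
  · refine ((Set.finite_Ico 0 e').union (hΓ.finite_gaps.image (· + e'))).subset ?_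
    rintro n ⟨hn0, hn⟩
    rcases lt_or_ge n e' with h | h
    · exact Or.inl ⟨hn0, h⟩
    · exact Or.inr ⟨n - e', ⟨by omega, fun h' => hn (mem_shiftSG.2 (Or.inr h'))⟩, by ring⟩

lemma ap_shiftSG (hΓ : IsNumericalSemigroup Γ) (hx : 1 ≤ x) (hxe' : x < e') :
    Ap (ShiftSG Γ e') x = insert 0 ((e' + ·) '' Ap Γ x) := by
  ext m
  simp only [Ap, Set.mem_ofPred_eq, Set.mem_insert_iff, Set.mem_image, mem_shiftSG,
    ← eq_sub_iff_add_eq', exists_eq_right]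
  rw [sub_right_comm]
  have h1 : m - e' ∈ Γ → 0 ≤ m - e' := hΓ.nonneg
  have h2 : m - e' - x ∈ Γ → 0 ≤ m - e' - x := hΓ.nonneg
  grind

lemma ncard_ap_shiftSG (hΓ : IsNumericalSemigroup Γ) (hx : 1 ≤ x) (hxe' : x < e') :
    (Ap (ShiftSG Γ e') x).ncard = (Ap Γ x).ncard + 1 := by
  rw [ap_shiftSG hΓ hx hxe', Set.ncard_insert_of_notMem _ ((hΓ.finite_ap x).image _),
    Set.ncard_image_of_injective _ (add_right_injective e')]
  rintro ⟨s, hs, hs0⟩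
  linarith [hΓ.nonneg hs.1]

end Shift

theorem frnumber_trans_general (Γ : Set ℤ) (hΓ : IsNumericalSemigroup Γ)
    (e : ℤ) (he : IsMultiplicity Γ e)
    (e' : ℤ) (he' : e' ∈ Γ) (hne : e' ≠ 0) :
    (FengRaoNumber2 (ShiftSG Γ e') e' : ℤ) =
      min e' ((FengRaoNumber2 Γ e : ℤ) + 1) := by
  obtain ⟨he, he0, -⟩ := he
  have he'_pos : 0 < e' := lt_of_le_of_ne (hΓ.nonneg he') hne.symm
  have hAp_e' := (hΓ.shiftSG he').ncard_ap_of_mem (self_mem_shiftSG hΓ.zero_mem)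
  apply fengRaoNumber2_eq
  · rcases le_or_gt e' (FengRaoNumber2 Γ e + 1) with h | h
    · exact ⟨e', he'_pos, le_rfl, by rw [hAp_e', min_eq_left h]⟩
    obtain ⟨x₀, hx₀, hx₀e, hx₀E⟩ :=
      exists_ncard_ap_eq_fengRaoNumber2 (S := Γ) (lt_of_le_of_ne (hΓ.nonneg he) he0.symm)
    have hx₀e' : x₀ < e' := by
      have := hΓ.le_ncard_ap (x := x₀) (by omega)
      omega
    refine ⟨x₀, hx₀, hx₀e'.le, ?_⟩
    rw [ncard_ap_shiftSG hΓ hx₀ hx₀e', hx₀E, min_eq_right h.le, Nat.cast_succ]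
  · intro x hx hxe'
    rcases hxe'.lt_or_eq with hlt | rfl
    · rw [ncard_ap_shiftSG hΓ hx hlt, Nat.cast_succ]
      exact min_le_of_right_le
        (by exact_mod_cast Nat.succ_le_succ (hΓ.fengRaoNumber2_le_ncard_ap he he0 hx))
    · rw [hAp_e']
      exact min_le_left _ _

theorem frnumber_trans (Γ : Set ℤ) (hΓ : IsNumericalSemigroup Γ)
    (hA : IsArf Γ) (e : ℤ) (he : IsMultiplicity Γ e)
    (e' : ℤ) (he' : e' ∈ Γ) (hne : e' ≠ 0) :
    (FengRaoNumber2 (ShiftSG Γ e') e' : ℤ) =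
      min e' ((FengRaoNumber2 Γ e : ℤ) + 1) :=
  frnumber_trans_general Γ hΓ e he e' he' hne
end

section
/- Let Γ be a numerical semigroup, e' ∈ Γ nonzero, and m ∈ Γ. Then the set of divisors of 2e' + m in Γ_{e'} equals (e' + D_Γ(m)) ∪ {0, 2e' + m}, and this union is disjoint. -/
/-!
A divisor of `2e' + m` in `Γ_{e'}` is either `0` or `e' + t` with `t ∈ Γ`. In the latter case
its cofactor `e' + (m - t)` is either `0`, so that the divisor is `2e' + m` itself, or lies in
`e' + Γ`, which says exactly that `t` divides `m` in `Γ`. Since `e' > 0`, the translated divisors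
lie in `[e', e' + m]`, away from `0` and `2e' + m`.
-/

theorem mem_image_add_left_iff {G : Type*} [AddCommGroup G] {A : Set G} {a x : G} :
    x ∈ (fun s => a + s) '' A ↔ x - a ∈ A := by
  rw [Set.image_add_left, Set.mem_preimage, neg_add_eq_sub]

theorem setDiv_subset_Icc {Γ : Set ℤ} (hΓ : ∀ n ∈ Γ, 0 ≤ n) (x : ℤ) :
    SetDiv Γ x ⊆ Set.Icc 0 x :=
  fun _ hs => ⟨hΓ _ hs.1, sub_nonneg.mp (hΓ _ hs.2)⟩

theorem setDiv_shiftSG_two_mul_add {Γ : Set ℤ} {e' m : ℤ} (he'm : e' + m ∈ Γ) :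
    SetDiv (ShiftSG Γ e') (2 * e' + m) =
      ((fun s => e' + s) '' SetDiv Γ m) ∪ {0, 2 * e' + m} := by
  ext s
  have hcofactor : 2 * e' + m - s - e' = m - (s - e') := by ring
  simp only [SetDiv, mem_shiftSG_iff, mem_image_add_left_iff, hcofactor, Set.mem_union,
    Set.mem_insert_iff, Set.mem_singleton_iff, Set.mem_ofPred_eq]
  constructor
  · rintro ⟨rfl | hs, hzero | hcof⟩
    · exact Or.inr (Or.inl rfl)
    · exact Or.inr (Or.inl rfl)
    · exact Or.inr (Or.inr (by linarith))
    · exact Or.inl ⟨hs, hcof⟩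
  · rintro (⟨hs, hcof⟩ | rfl | rfl)
    · exact ⟨Or.inr hs, Or.inr hcof⟩
    · exact ⟨Or.inl rfl, Or.inr (by rwa [show m - (0 - e') = e' + m by ring])⟩
    · exact ⟨Or.inr (by rwa [show 2 * e' + m - e' = e' + m by ring]), Or.inl (sub_self _)⟩

theorem disjoint_image_setDiv {Γ : Set ℤ} {e' m : ℤ} (hΓ : ∀ n ∈ Γ, 0 ≤ n) (he' : 0 < e') :
    Disjoint ((fun s => e' + s) '' SetDiv Γ m) {0, 2 * e' + m} := by
  rw [Set.disjoint_right]
  rintro x hx ⟨t, ht, rfl⟩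
  obtain ⟨ht0, htm⟩ := setDiv_subset_Icc hΓ m ht
  simp only [Set.mem_insert_iff, Set.mem_singleton_iff] at hx
  omega

theorem divisors_trans (Γ : Set ℤ) (hΓ : IsNumericalSemigroup Γ)
    (e' : ℤ) (he' : e' ∈ Γ) (hne : e' ≠ 0) (m : ℤ) (hm : m ∈ Γ) :
    SetDiv (ShiftSG Γ e') (2 * e' + m) =
      ((fun s => e' + s) '' SetDiv Γ m) ∪ {0, 2 * e' + m} ∧
    Disjoint ((fun s => e' + s) '' SetDiv Γ m) {0, 2 * e' + m} ∧
    (0 : ℤ) ≠ 2 * e' + m := by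
  obtain ⟨hnonneg, -, hadd, -⟩ := hΓ
  have he'pos : 0 < e' := (hnonneg e' he').lt_of_ne' hne
  refine ⟨setDiv_shiftSG_two_mul_add (hadd e' he' m hm), disjoint_image_setDiv hnonneg he'pos, ?_⟩
  linarith [hnonneg m hm]
end

section
/- Let Γ be a numerical semigroup with conductor c and multiplicity e, and let m ≥ c be in Γ. Then min{#(D(m) ∪ D(m')) : m' ∈ Γ, m' > m} = min{#(D(m) ∪ D(m')) : m' ∈ Γ, m < m' ≤ m + e}. -/
/-!
If `m ≥ c` and `m' > m + e`, then `m' - e` also lies in `Γ` above `m`, and translation by `e`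
maps the divisors of `m' - e` that do not divide `m` injectively into the divisors of `m'` that
do not divide `m` (if `s + e` divided `m`, so would `s`). Hence replacing `m'` by `m' - e` never
increases `#(D(m) ∪ D(m'))`, and descending by steps of `e` lands in `(m, m + e]`.
-/

section

variable {Γ : Set ℤ}

lemma setDiv_finite (hnonneg : ∀ n ∈ Γ, 0 ≤ n) (x : ℤ) : (SetDiv Γ x).Finite :=
  (Set.finite_Icc 0 x).subset fun s ⟨hs, hxs⟩ => by
    have := hnonneg s hs
    have := hnonneg _ hxs
    constructor <;> linarith

lemma mapsTo_add_setDiv_sdiff (hadd : ∀ a ∈ Γ, ∀ b ∈ Γ, a + b ∈ Γ) {e : ℤ} (he : e ∈ Γ)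
    (m x : ℤ) :
    Set.MapsTo (· + e) (SetDiv Γ (x - e) \ SetDiv Γ m) (SetDiv Γ x \ SetDiv Γ m) := by
  rintro s ⟨⟨hs, hxs⟩, hsm⟩
  refine ⟨⟨hadd s hs e he, by rwa [sub_add_eq_sub_sub_swap]⟩, fun ⟨_, hms⟩ => hsm ⟨hs, ?_⟩⟩
  convert hadd _ hms e he using 1
  ring

lemma ncard_union_setDiv_sub_le (hΓ : IsNumericalSemigroup Γ) {e : ℤ} (he : e ∈ Γ) (m x : ℤ) :
    (SetDiv Γ m ∪ SetDiv Γ (x - e)).ncard ≤ (SetDiv Γ m ∪ SetDiv Γ x).ncard := by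
  obtain ⟨hnonneg, -, hadd, -⟩ := hΓ
  have hfin := setDiv_finite hnonneg
  calc (SetDiv Γ m ∪ SetDiv Γ (x - e)).ncard
      = (SetDiv Γ (x - e) \ SetDiv Γ m).ncard + (SetDiv Γ m).ncard := by
        rw [Set.union_comm, Set.ncard_sdiff_add_ncard _ _ (hfin _) (hfin _)]
    _ ≤ (SetDiv Γ x \ SetDiv Γ m).ncard + (SetDiv Γ m).ncard := by
        exact Nat.add_le_add_right (Set.ncard_le_ncard_of_injOn _
          (mapsTo_add_setDiv_sdiff hadd he m x) (add_left_injective e).injOn (hfin x).sdiff) _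
    _ = (SetDiv Γ m ∪ SetDiv Γ x).ncard := by
        rw [Set.union_comm, Set.ncard_sdiff_add_ncard _ _ (hfin _) (hfin _)]

lemma exists_le_add_ncard_union_setDiv_le (hΓ : IsNumericalSemigroup Γ) {c : ℤ}
    (hc : ∀ n, c ≤ n → n ∈ Γ) {e : ℤ} (he : e ∈ Γ) (he₀ : 0 < e) {m : ℤ} (hmc : c ≤ m)
    {x : ℤ} (hx : x ∈ Γ) (hmx : m < x) :
    ∃ y ∈ Γ, m < y ∧ y ≤ m + e ∧
      (SetDiv Γ m ∪ SetDiv Γ y).ncard ≤ (SetDiv Γ m ∪ SetDiv Γ x).ncard := by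
  obtain ⟨k, hk⟩ : ∃ k : ℕ, x - m = k := ⟨(x - m).toNat, by omega⟩
  induction k using Nat.strong_induction_on generalizing x with
  | _ k ih =>
    by_cases hxe : x ≤ m + e
    · exact ⟨x, hx, hmx, hxe, le_rfl⟩
    obtain ⟨y, hy, hmy, hye, hle⟩ :=
      ih (x - e - m).toNat (by omega) (x := x - e) (hc _ (by omega)) (by omega) (by omega)
    exact ⟨y, hy, hmy, hye, hle.trans (ncard_union_setDiv_sub_le hΓ he m x)⟩

end

theorem min_up_to_multiplicity_general (Γ : Set ℤ) (hΓ : IsNumericalSemigroup Γ)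
    (c e : ℤ) (hc : IsConductor Γ c) (he : IsMultiplicity Γ e)
    (m : ℤ) (hmc : c ≤ m) :
    sInf {n : ℕ | ∃ m' ∈ Γ, m < m' ∧ (SetDiv Γ m ∪ SetDiv Γ m').ncard = n} =
    sInf {n : ℕ | ∃ m' ∈ Γ, m < m' ∧ m' ≤ m + e ∧
      (SetDiv Γ m ∪ SetDiv Γ m').ncard = n} := by
  have he₀ : 0 < e := lt_of_le_of_ne (hΓ.1 e he.1) he.2.1.symm
  apply le_antisymm
  · refine csInf_le_csInf' ?_ fun n ⟨m', hm', hmm', _, hn⟩ => ⟨m', hm', hmm', hn⟩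
    exact ⟨_, m + e, hc.1 _ (by omega), by omega, le_rfl, rfl⟩
  · refine le_csInf ⟨_, m + e, hc.1 _ (by omega), by omega, rfl⟩ ?_
    rintro n ⟨m', hm', hmm', rfl⟩
    obtain ⟨y, hy, hmy, hye, hle⟩ :=
      exists_le_add_ncard_union_setDiv_le hΓ hc.1 he.1 he₀ hmc hm' hmm'
    exact le_trans (Nat.sInf_le ⟨y, hy, hmy, hye, rfl⟩) hle

theorem min_up_to_multiplicity (Γ : Set ℤ) (hΓ : IsNumericalSemigroup Γ)
    (c e : ℤ) (hc : IsConductor Γ c) (he : IsMultiplicity Γ e)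
    (m : ℤ) (hm : m ∈ Γ) (hmc : c ≤ m) :
    sInf {n : ℕ | ∃ m' ∈ Γ, m < m' ∧ (SetDiv Γ m ∪ SetDiv Γ m').ncard = n} =
    sInf {n : ℕ | ∃ m' ∈ Γ, m < m' ∧ m' ≤ m + e ∧
      (SetDiv Γ m ∪ SetDiv Γ m').ncard = n} :=
  min_up_to_multiplicity_general Γ hΓ c e hc he m hmc
end

section
/- Let Γ be an Arf numerical semigroup with conductor c and multiplicity e ≥ 3. Then c + e − 2 is irreducible in Γ or c + e − 3 is irreducible in Γ. -/
/-! In an Arf semigroup of multiplicity `e`, an element `m` with `m - e ∉ Γ` is irreducible: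
a proper factorisation `m = s + (m - s)` has both factors `≥ e`, and the Arf property then puts
`s + (m - s) - e = m - e` in `Γ`. So it suffices that `c - 2` or `c - 3` is a gap. If both were
in `Γ`, the Arf property applied to `c - 2, c - 2, c - 3` would put the gap `c - 1` in `Γ`. -/

namespace IsArf

variable {Γ : Set ℤ}

theorem add_sub_mem_s15 (hA : IsArf Γ) {a b z : ℤ} (ha : a ∈ Γ) (hb : b ∈ Γ) (hz : z ∈ Γ)
    (hza : z ≤ a) (hzb : z ≤ b) : a + b - z ∈ Γ := by
  rcases le_total a b with hab | hba
  · simpa only [add_comm] using hA b hb a ha z hz hza hab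
  · exact hA a ha b hb z hz hzb hba

theorem add_one_mem (hA : IsArf Γ) {x : ℤ} (hx : x ∈ Γ) (hx' : x - 1 ∈ Γ) : x + 1 ∈ Γ := by
  convert hA.add_sub_mem_s15 hx hx hx' (by omega) (by omega) using 1
  ring

theorem irreducibleIn_of_sub_not_mem (hA : IsArf Γ) (h0 : (0 : ℤ) ∈ Γ) {e m : ℤ}
    (he : IsMultiplicity Γ e) (hm : m ∈ Γ) (hm0 : m ≠ 0) (hme : m - e ∉ Γ) :
    IrreducibleIn Γ m := by
  refine ⟨hm, hm0, Set.Subset.antisymm ?_ ?_⟩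
  · rintro s ⟨hs, hms⟩
    by_contra hs'
    simp only [Set.mem_insert_iff, Set.mem_singleton_iff, not_or] at hs'
    have hes : e ≤ s := he.2.2 s hs hs'.1
    have hems : e ≤ m - s := he.2.2 _ hms (sub_ne_zero.2 (Ne.symm hs'.2))
    exact hme (by simpa using hA.add_sub_mem_s15 hs hms he.1 hes hems)
  · rintro s (rfl | rfl)
    · exact ⟨h0, by simpa using hm⟩
    · exact ⟨hm, by simpa using h0⟩

end IsArf

theorem IsConductor.sub_one_not_mem {Γ : Set ℤ} {c : ℤ} (hc : IsConductor Γ c) : c - 1 ∉ Γ := by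
  intro h
  have := hc.2 (c - 1) fun n hn => (eq_or_lt_of_le hn).elim (· ▸ h) fun hlt => hc.1 n (by omega)
  omega

theorem irreducible_near_conductor (Γ : Set ℤ) (hΓ : IsNumericalSemigroup Γ)
    (hA : IsArf Γ) (c e : ℤ) (hc : IsConductor Γ c)
    (he : IsMultiplicity Γ e) (he3 : 3 ≤ e) :
    IrreducibleIn Γ (c + e - 2) ∨ IrreducibleIn Γ (c + e - 3) := by
  have hc1 : 1 ≤ c := by
    by_contra! h
    have := he.2.2 1 (hc.1 1 h.le) one_ne_zero
    omega
  have irreducible_of_gap (k : ℤ) (hk : 2 ≤ k ∧ k ≤ 3) (hgap : c - k ∉ Γ) :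
      IrreducibleIn Γ (c + e - k) :=
    hA.irreducibleIn_of_sub_not_mem hΓ.2.1 he (hc.1 _ (by omega)) (by omega)
      (by rwa [show c + e - k - e = c - k by ring])
  by_cases hc2 : c - 2 ∈ Γ
  · refine .inr (irreducible_of_gap 3 (by norm_num) fun hc3 => hc.sub_one_not_mem ?_)
    convert hA.add_one_mem hc2 (by convert hc3 using 1; ring) using 1
    ring
  · exact .inl (irreducible_of_gap 2 (by norm_num) hc2)
end

section
/- Let c be an even integer greater than one and Γ = ⟨2, c+1⟩. Then the second Feng-Rao distance satisfies δ²(2) = 3, and δ²(m) = 4 for all m ∈ Γ with 2 < m ≤ c + 1. -/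
lemma fengRaoDist2_eq_of_le_of_exists {Γ : Set ℤ} {m : ℤ} {k : ℕ}
    (hle : ∀ m₁ ∈ Γ, ∀ m₂ ∈ Γ, m ≤ m₁ → m₁ < m₂ → k ≤ (SetDiv Γ m₁ ∪ SetDiv Γ m₂).ncard)
    (hex : ∃ m₁ ∈ Γ, ∃ m₂ ∈ Γ, m ≤ m₁ ∧ m₁ < m₂ ∧ (SetDiv Γ m₁ ∪ SetDiv Γ m₂).ncard = k) :
    FengRaoDist2 Γ m = k :=
  IsLeast.csInf_eq ⟨hex, by
    rintro n ⟨m₁, hm₁, m₂, hm₂, hm, h, rfl⟩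
    exact hle m₁ hm₁ m₂ hm₂ hm h⟩

lemma ncard_setDiv_union_of_irreducibleIn {Γ : Set ℤ} {a b : ℤ} (ha : IrreducibleIn Γ a)
    (hb : IrreducibleIn Γ b) (hab : a ≠ b) : (SetDiv Γ a ∪ SetDiv Γ b).ncard = 3 := by
  rw [ha.2.2, hb.2.2, Set.ncard_eq_three]
  refine ⟨0, a, b, ha.2.1.symm, hb.2.1.symm, hab, ?_⟩
  ext s
  simp only [Set.mem_union, Set.mem_insert_iff, Set.mem_singleton_iff]
  tauto

namespace IsNumericalSemigroup

variable {Γ : Set ℤ}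

lemma setDiv_subset_Icc (hΓ : IsNumericalSemigroup Γ) (x : ℤ) : SetDiv Γ x ⊆ Set.Icc 0 x :=
  fun s ⟨hs, hxs⟩ => ⟨hΓ.1 s hs, by linarith [hΓ.1 _ hxs]⟩

lemma setDiv_finite (hΓ : IsNumericalSemigroup Γ) (x : ℤ) : (SetDiv Γ x).Finite :=
  (Set.finite_Icc 0 x).subset (hΓ.setDiv_subset_Icc x)

lemma zero_mem_setDiv (hΓ : IsNumericalSemigroup Γ) {x : ℤ} (hx : x ∈ Γ) : 0 ∈ SetDiv Γ x :=
  ⟨hΓ.2.1, by rwa [sub_zero]⟩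

lemma self_mem_setDiv (hΓ : IsNumericalSemigroup Γ) {x : ℤ} (hx : x ∈ Γ) : x ∈ SetDiv Γ x :=
  ⟨hx, by rw [sub_self]; exact hΓ.2.1⟩

lemma setDiv_subset_setDiv (hΓ : IsNumericalSemigroup Γ) {x y : ℤ} (h : x - y ∈ Γ) :
    SetDiv Γ y ⊆ SetDiv Γ x := fun s ⟨hs, hys⟩ =>
  ⟨hs, sub_add_sub_cancel x y s ▸ hΓ.2.2.1 _ h _ hys⟩

lemma ncard_le_ncard_setDiv_union (hΓ : IsNumericalSemigroup Γ) {S : Set ℤ} {m₁ m₂ : ℤ}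
    (hS : S ⊆ SetDiv Γ m₁ ∪ SetDiv Γ m₂) : S.ncard ≤ (SetDiv Γ m₁ ∪ SetDiv Γ m₂).ncard :=
  Set.ncard_le_ncard hS ((hΓ.setDiv_finite m₁).union (hΓ.setDiv_finite m₂))

lemma triple_subset_setDiv_union (hΓ : IsNumericalSemigroup Γ) {m₁ m₂ : ℤ} (hm₁ : m₁ ∈ Γ)
    (hm₂ : m₂ ∈ Γ) : {0, m₁, m₂} ⊆ SetDiv Γ m₁ ∪ SetDiv Γ m₂ := by
  rintro s (rfl | rfl | rfl)
  · exact Or.inl (hΓ.zero_mem_setDiv hm₁)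
  · exact Or.inl (hΓ.self_mem_setDiv hm₁)
  · exact Or.inr (hΓ.self_mem_setDiv hm₂)

lemma three_le_ncard_setDiv_union (hΓ : IsNumericalSemigroup Γ) {m₁ m₂ : ℤ} (hm₁ : m₁ ∈ Γ)
    (hm₂ : m₂ ∈ Γ) (h₀ : 0 < m₁) (h : m₁ < m₂) : 3 ≤ (SetDiv Γ m₁ ∪ SetDiv Γ m₂).ncard := by
  calc 3 = ({0, m₁, m₂} : Set ℤ).ncard :=
        (Set.ncard_eq_three.mpr ⟨0, m₁, m₂, by omega, by omega, by omega, rfl⟩).symm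
    _ ≤ _ := hΓ.ncard_le_ncard_setDiv_union (hΓ.triple_subset_setDiv_union hm₁ hm₂)

end IsNumericalSemigroup

/-- The semigroup `⟨2, c + 1⟩` when `c` is even (`c` is then its conductor). -/
def hyperelliptic (c : ℤ) : Set ℤ := {n : ℤ | (0 ≤ n ∧ 2 ∣ n) ∨ c + 1 ≤ n}

namespace Hyperelliptic

variable {c : ℤ}

lemma mem_iff {n : ℤ} : n ∈ hyperelliptic c ↔ (0 ≤ n ∧ 2 ∣ n) ∨ c + 1 ≤ n := Iff.rfl

lemma mem_setDiv_iff {x s : ℤ} :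
    s ∈ SetDiv (hyperelliptic c) x ↔
      ((0 ≤ s ∧ 2 ∣ s) ∨ c + 1 ≤ s) ∧ ((0 ≤ x - s ∧ 2 ∣ x - s) ∨ c + 1 ≤ x - s) := Iff.rfl

lemma isNumericalSemigroup (hc : 0 ≤ c) : IsNumericalSemigroup (hyperelliptic c) := by
  refine ⟨fun n hn => ?_, Or.inl ⟨le_rfl, dvd_zero 2⟩, fun a ha b hb => ?_, ?_⟩
  · rw [mem_iff] at hn
    omega
  · rw [mem_iff] at ha hb ⊢
    omega
  · refine (Set.finite_Icc 0 c).subset fun n ⟨hn, hnΓ⟩ => ?_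
    rw [mem_iff] at hnΓ
    exact ⟨hn, by omega⟩

lemma irreducibleIn_two (hc : 1 < c) : IrreducibleIn (hyperelliptic c) 2 := by
  refine ⟨Or.inl ⟨zero_le_two, dvd_rfl⟩, two_ne_zero, Set.ext fun s => ?_⟩
  simp only [mem_setDiv_iff, Set.mem_insert_iff, Set.mem_singleton_iff]
  omega

lemma irreducibleIn_conductor_succ (hc : Even c) (hc₀ : 0 ≤ c) :
    IrreducibleIn (hyperelliptic c) (c + 1) := by
  obtain ⟨k, rfl⟩ := hc
  refine ⟨Or.inr le_rfl, by omega, Set.ext fun s => ?_⟩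
  simp only [mem_setDiv_iff, Set.mem_insert_iff, Set.mem_singleton_iff]
  omega

lemma setDiv_conductor_add_three (hc : Even c) (hc₁ : 1 < c) :
    SetDiv (hyperelliptic c) (c + 3) = {0, 2, c + 1, c + 3} := by
  obtain ⟨k, rfl⟩ := hc
  ext s
  simp only [mem_setDiv_iff, Set.mem_insert_iff, Set.mem_singleton_iff]
  omega

lemma two_mem_setDiv_union {m₁ m₂ : ℤ} (hm₁ : m₁ ∈ hyperelliptic c) (hm₂ : m₂ ∈ hyperelliptic c)
    (h₂ : 2 < m₁) (h : m₁ < m₂) :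
    2 ∈ SetDiv (hyperelliptic c) m₁ ∪ SetDiv (hyperelliptic c) m₂ := by
  rw [mem_iff] at hm₁ hm₂
  simp only [Set.mem_union, mem_setDiv_iff]
  omega

lemma four_le_ncard_setDiv_union (hc : 0 ≤ c) {m₁ m₂ : ℤ} (hm₁ : m₁ ∈ hyperelliptic c)
    (hm₂ : m₂ ∈ hyperelliptic c) (h₂ : 2 < m₁) (h : m₁ < m₂) :
    4 ≤ (SetDiv (hyperelliptic c) m₁ ∪ SetDiv (hyperelliptic c) m₂).ncard := by
  have hΓ := isNumericalSemigroup hc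
  calc 4 = ({2, 0, m₁, m₂} : Set ℤ).ncard :=
        (Set.ncard_eq_four.mpr ⟨2, 0, m₁, m₂, by omega, by omega, by omega, by omega, by omega,
          by omega, rfl⟩).symm
    _ ≤ _ := hΓ.ncard_le_ncard_setDiv_union <| Set.insert_subset
        (two_mem_setDiv_union hm₁ hm₂ h₂ h) (hΓ.triple_subset_setDiv_union hm₁ hm₂)

end Hyperelliptic

theorem frdist2_mult2 (c : ℤ) (hc : Even c) (hc1 : 1 < c) :
    let Γ : Set ℤ := {n : ℤ | (0 ≤ n ∧ 2 ∣ n) ∨ c + 1 ≤ n}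
    FengRaoDist2 Γ 2 = 3 ∧
    ∀ m ∈ Γ, 2 < m → m ≤ c + 1 → FengRaoDist2 Γ m = 4 := by
  show FengRaoDist2 (hyperelliptic c) 2 = 3 ∧
    ∀ m ∈ hyperelliptic c, 2 < m → m ≤ c + 1 → FengRaoDist2 (hyperelliptic c) m = 4
  have hc₀ : 0 ≤ c := by omega
  have hΓ := Hyperelliptic.isNumericalSemigroup hc₀
  have hirr₂ := Hyperelliptic.irreducibleIn_two hc1
  have hirr := Hyperelliptic.irreducibleIn_conductor_succ hc hc₀
  refine ⟨fengRaoDist2_eq_of_le_of_exists ?_ ?_, fun m _ hm₂ hmc =>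
    fengRaoDist2_eq_of_le_of_exists ?_ ?_⟩
  · exact fun m₁ hm₁ m₂ hm₂ h₂ h => hΓ.three_le_ncard_setDiv_union hm₁ hm₂ (by omega) h
  · exact ⟨2, hirr₂.1, c + 1, hirr.1, le_rfl, by omega,
      ncard_setDiv_union_of_irreducibleIn hirr₂ hirr (by omega)⟩
  · exact fun m₁ hm₁ m₂ hm₂ hm h =>
      Hyperelliptic.four_le_ncard_setDiv_union hc₀ hm₁ hm₂ (by omega) h
  · have hsub : SetDiv (hyperelliptic c) (c + 1) ⊆ SetDiv (hyperelliptic c) (c + 3) :=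
      hΓ.setDiv_subset_setDiv (Or.inl ⟨by omega, by simp⟩)
    refine ⟨c + 1, hirr.1, c + 3, Or.inr (by omega), hmc, by omega, ?_⟩
    rw [Set.union_eq_right.mpr hsub, Hyperelliptic.setDiv_conductor_add_three hc hc1,
      Set.ncard_eq_four]
    exact ⟨0, 2, c + 1, c + 3, by omega, by omega, by omega, by omega, by omega, by omega, rfl⟩
end

section
/- Let Γ be the ordinary numerical semigroup {0} ∪ (e + ℕ) with e ≥ 2. Then for m ∈ Γ: δ²(m) = 3 if e ≤ m < 2e − 1, and δ²(m) = m − (2e − 1) + 4 if m ≥ 2e − 1. -/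
/-!
For `e ≤ x` the divisors of `x` in the ordinary semigroup are `{0, x} ∪ [e, x - e]`, so for
`e ≤ m₁ < m₂` we get `D(m₁) ∪ D(m₂) = {0, m₁, m₂} ∪ [e, m₂ - e]`. Its size is
`3 + max 0 (m₂ - 2e + 1)`, or one less when `m₁ ∈ [e, m₂ - e]`, which forces `m₂ ≥ m₁ + e`
and costs more than it saves. The minimum over `m ≤ m₁ < m₂` is `max 3 (m - 2e + 5)`,
attained by consecutive `m₁, m₂`.
-/

def ordinary (e : ℤ) : Set ℤ := {n : ℤ | n = 0 ∨ e ≤ n}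

open Set

namespace ordinary

variable {e : ℤ}

lemma setDiv_eq {x : ℤ} (hx : e ≤ x) :
    SetDiv (ordinary e) x = insert 0 (insert x (Icc e (x - e))) := by
  ext s
  simp only [SetDiv, ordinary, mem_ofPred_eq, mem_insert_iff, mem_Icc]
  omega

lemma setDiv_union_eq {m₁ m₂ : ℤ} (h₁ : e ≤ m₁) (h₁₂ : m₁ ≤ m₂) :
    SetDiv (ordinary e) m₁ ∪ SetDiv (ordinary e) m₂ =
      insert 0 (insert m₁ (insert m₂ (Icc e (m₂ - e)))) := by
  rw [setDiv_eq h₁, setDiv_eq (h₁.trans h₁₂)]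
  ext s
  simp only [mem_union, mem_insert_iff, mem_Icc]
  omega

section

variable {m₁ m₂ : ℤ} (he : 0 < e) (h₁ : e ≤ m₁) (h₁₂ : m₁ < m₂)
include he h₁ h₁₂

-- `m₂ - e < m₁` says exactly that `m₁` is not a divisor of `m₂`.
lemma ncard_setDiv_union_of_lt (hgap : m₂ - e < m₁) :
    (SetDiv (ordinary e) m₁ ∪ SetDiv (ordinary e) m₂).ncard = (m₂ + 1 - 2 * e).toNat + 3 := by
  have hfin : (Icc e (m₂ - e)).Finite := finite_Icc _ _
  rw [setDiv_union_eq h₁ h₁₂.le,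
    ncard_insert_of_notMem (by simp only [mem_insert_iff, mem_Icc]; omega)
      ((hfin.insert _).insert _),
    ncard_insert_of_notMem (by simp only [mem_insert_iff, mem_Icc]; omega) (hfin.insert _),
    ncard_insert_of_notMem (by simp only [mem_Icc]; omega) hfin,
    ← Finset.coe_Icc, ncard_coe_finset, Int.card_Icc]
  omega

lemma ncard_setDiv_union_of_le (hgap : m₁ ≤ m₂ - e) :
    (SetDiv (ordinary e) m₁ ∪ SetDiv (ordinary e) m₂).ncard = (m₂ + 1 - 2 * e).toNat + 2 := by
  have hfin : (Icc e (m₂ - e)).Finite := finite_Icc _ _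
  rw [setDiv_union_eq h₁ h₁₂.le,
    insert_eq_of_mem (show m₁ ∈ insert m₂ (Icc e (m₂ - e)) from Or.inr ⟨h₁, hgap⟩),
    ncard_insert_of_notMem (by simp only [mem_insert_iff, mem_Icc]; omega) (hfin.insert _),
    ncard_insert_of_notMem (by simp only [mem_Icc]; omega) hfin,
    ← Finset.coe_Icc, ncard_coe_finset, Int.card_Icc]
  omega

end

/-- The minimum is attained at `m₁ = max m (2e - 2)`, `m₂ = m₁ + 1`. -/
lemma isLeast_ncard_setDiv_union (he : 2 ≤ e) {m : ℤ} (hm : e ≤ m) :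
    IsLeast {n : ℕ | ∃ m₁ ∈ ordinary e, ∃ m₂ ∈ ordinary e, m ≤ m₁ ∧ m₁ < m₂ ∧
      (SetDiv (ordinary e) m₁ ∪ SetDiv (ordinary e) m₂).ncard = n}
      (max 3 (m - 2 * e + 5)).toNat := by
  refine ⟨⟨max m (2 * e - 2), Or.inr (by omega), max m (2 * e - 2) + 1, Or.inr (by omega),
    le_max_left _ _, lt_add_one _, ?_⟩, ?_⟩
  · rw [ncard_setDiv_union_of_lt (by omega) (by omega) (lt_add_one _) (by omega)]
    omega
  · rintro n ⟨m₁, hm₁, m₂, hm₂, hmm₁, h₁₂, rfl⟩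
    have h₁ : e ≤ m₁ := hm₁.elim (fun h => by omega) id
    rcases lt_or_ge (m₂ - e) m₁ with hgap | hgap
    · rw [ncard_setDiv_union_of_lt (by omega) h₁ h₁₂ hgap]
      omega
    · rw [ncard_setDiv_union_of_le (by omega) h₁ h₁₂ hgap]
      omega

end ordinary

theorem fengRaoDist2_ordinary {e m : ℤ} (he : 2 ≤ e) (hm : e ≤ m) :
    (FengRaoDist2 (ordinary e) m : ℤ) = max 3 (m - 2 * e + 5) := by
  rw [FengRaoDist2, (ordinary.isLeast_ncard_setDiv_union he hm).csInf_eq]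
  omega

theorem frdist2_ordinary (e : ℤ) (he : 2 ≤ e) :
    let Γ : Set ℤ := {n : ℤ | n = 0 ∨ e ≤ n}
    ∀ m ∈ Γ, (e ≤ m → m < 2 * e - 1 → FengRaoDist2 Γ m = 3) ∧
      (2 * e - 1 ≤ m → (FengRaoDist2 Γ m : ℤ) = m - (2 * e - 1) + 4) := by
  intro Γ m _
  have key : e ≤ m → (FengRaoDist2 Γ m : ℤ) = max 3 (m - 2 * e + 5) := fengRaoDist2_ordinary he
  constructor
  · intro hem hm
    have := key hem
    omega
  · intro hm
    have := key (by omega)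
    omega
end
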